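/- arXiv:2405.05081 — 2 statements merged into one kernel-verified Lean document; each statement's English description precedes it below -/
import Mathlib

section
/- Let (X, Y) be a random pair on a probability space, with X valued in a measurable space 𝒳 and Y real, and suppose E[|Y|^r] ≤ M for some r > 1 and M > 0. Let ℓ : ℝ × ℝ → [0, ∞) be a measurable loss function satisfying |ℓ(u, v) − ℓ(u, v')| ≤ K·|v − v'| for all u, v, v' ∈ ℝ, for some K > 0. Let β > 0, and let h, h*, h*_β : 𝒳 → ℝ be measurable functions such that E[ℓ(h*_β(X), T_β Y)] ≤ E[ℓ(h*(X), T_β Y)] and such that all the expectations appearing below are finite. Then E[ℓ(h(X), Y)] − E[ℓ(h*(X), Y)] ≤ E[ℓ(h(X), T_β Y)] − E[ℓ(h*_β(X), T_β Y)] + 2·K·M / β^{r−1}. -/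
open MeasureTheory

/-- Truncation at level `β` of a real number `y`: `y` if `|y| ≤ β` and
`β * sign y` otherwise. -/
noncomputable def trunc (β y : ℝ) : ℝ :=
  if |y| ≤ β then y else β * Real.sign y

lemma trunc_eq (β : ℝ) (hβ : 0 < β) (y : ℝ) : trunc β y = max (-β) (min y β) := by
  unfold trunc
  rcases le_or_gt (|y|) β with hle | hlt
  · rw [if_pos hle]
    rw [abs_le] at hle
    rw [min_eq_left hle.2, max_eq_right hle.1]
  · rw [if_neg (not_le.mpr hlt)]
    rcases le_or_gt y 0 with hy | hy
    · have hy' : y < -β := by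
        rw [abs_of_nonpos hy] at hlt; linarith
      rw [Real.sign_of_neg (by linarith), min_eq_left (by linarith),
        max_eq_left (by linarith)]
      ring
    · have hy' : β < y := by rw [abs_of_pos hy] at hlt; linarith
      rw [Real.sign_of_pos hy, min_eq_right (by linarith),
        max_eq_right (by linarith)]
      ring

lemma trunc_dist_le (β : ℝ) (hβ : 0 < β) (r : ℝ) (hr : 1 < r) (y : ℝ) :
    |y - trunc β y| ≤ |y| ^ r / β ^ (r - 1) := by
  have hβr : (0:ℝ) < β ^ (r - 1) := Real.rpow_pos_of_pos hβ _
  unfold trunc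
  rcases le_or_gt (|y|) β with hle | hlt
  · rw [if_pos hle]
    simp only [sub_self, abs_zero]
    positivity
  · rw [if_neg (not_le.mpr hlt)]
    have hy0 : 0 < |y| := lt_trans hβ hlt
    have key : |y - β * Real.sign y| = |y| - β := by
      rcases le_or_gt y 0 with hy | hy
      · have hy' : y < -β := by rw [abs_of_nonpos hy] at hlt; linarith
        rw [Real.sign_of_neg (by linarith), abs_of_nonpos hy,
          abs_of_nonpos (by linarith : y - β * (-1) ≤ 0)]
        ring
      · have hy' : β < y := by rw [abs_of_pos hy] at hlt; linarith
        rw [Real.sign_of_pos hy, abs_of_pos hy,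
          abs_of_pos (by linarith : (0:ℝ) < y - β * 1)]
        ring
    rw [key]
    have h1 : |y| ≤ |y| ^ r / β ^ (r - 1) := by
      rw [le_div_iff₀ hβr]
      have h2 : β ^ (r - 1) ≤ |y| ^ (r - 1) :=
        Real.rpow_le_rpow hβ.le hlt.le (by linarith)
      calc |y| * β ^ (r - 1) ≤ |y| * |y| ^ (r - 1) := by
            exact mul_le_mul_of_nonneg_left h2 hy0.le
        _ = |y| ^ r := by
            rw [← Real.rpow_one_add' (by positivity) (by intro hc; linarith)]
            ring_nf
    linarith

/-- If `E[|Y|^r] ≤ M` for some `r > 1`, `ℓ` is `K`-Lipschitz in its second argument,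
`β > 0`, and `h*_β` has truncated risk no larger than that of `h*`, then
`E[ℓ(h(X),Y)] − E[ℓ(h*(X),Y)] ≤ E[ℓ(h(X),T_β Y)] − E[ℓ(h*_β(X),T_β Y)] + 2KM/β^(r−1)`. -/
theorem excess_risk_le_truncated_excess_risk {Ω 𝒳 : Type*}
    [MeasurableSpace Ω] [MeasurableSpace 𝒳]
    (μ : Measure Ω) [IsProbabilityMeasure μ]
    (X : Ω → 𝒳) (Y : Ω → ℝ) (hX : Measurable X) (hY : Measurable Y)
    (r M : ℝ) (hr : 1 < r) (hM : 0 < M)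
    (hYr : Integrable (fun ω => |Y ω| ^ r) μ)
    (hYM : (∫ ω, |Y ω| ^ r ∂μ) ≤ M)
    (ℓ : ℝ → ℝ → ℝ) (hℓmeas : Measurable (Function.uncurry ℓ))
    (hℓnonneg : ∀ u v, 0 ≤ ℓ u v)
    (K : ℝ) (hK : 0 < K)
    (hlip : ∀ u v v', |ℓ u v - ℓ u v'| ≤ K * |v - v'|)
    (β : ℝ) (hβ : 0 < β)
    (h hstar hstarβ : 𝒳 → ℝ)
    (hh : Measurable h) (hhstar : Measurable hstar) (hhstarβ : Measurable hstarβ)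
    (int1 : Integrable (fun ω => ℓ (h (X ω)) (Y ω)) μ)
    (int2 : Integrable (fun ω => ℓ (hstar (X ω)) (Y ω)) μ)
    (int3 : Integrable (fun ω => ℓ (h (X ω)) (trunc β (Y ω))) μ)
    (int4 : Integrable (fun ω => ℓ (hstarβ (X ω)) (trunc β (Y ω))) μ)
    (int5 : Integrable (fun ω => ℓ (hstar (X ω)) (trunc β (Y ω))) μ)
    (hmin : (∫ ω, ℓ (hstarβ (X ω)) (trunc β (Y ω)) ∂μ) ≤
      ∫ ω, ℓ (hstar (X ω)) (trunc β (Y ω)) ∂μ) :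
    (∫ ω, ℓ (h (X ω)) (Y ω) ∂μ) - (∫ ω, ℓ (hstar (X ω)) (Y ω) ∂μ) ≤
      (∫ ω, ℓ (h (X ω)) (trunc β (Y ω)) ∂μ)
        - (∫ ω, ℓ (hstarβ (X ω)) (trunc β (Y ω)) ∂μ)
        + 2 * K * M / β ^ (r - 1) := by
  have hβr : (0:ℝ) < β ^ (r - 1) := Real.rpow_pos_of_pos hβ _
  -- measurability of truncated Y
  have hT : Measurable (fun ω => trunc β (Y ω)) := by
    have : (fun ω => trunc β (Y ω)) = fun ω => max (-β) (min (Y ω) β) := by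
      funext ω; exact trunc_eq β hβ (Y ω)
    rw [this]
    exact measurable_const.max (hY.min measurable_const)
  -- integrability of |Y - trunc|
  have hbound : ∀ ω, |Y ω - trunc β (Y ω)| ≤ |Y ω| ^ r / β ^ (r - 1) :=
    fun ω => trunc_dist_le β hβ r hr (Y ω)
  have hgint : Integrable (fun ω => |Y ω - trunc β (Y ω)|) μ := by
    refine (hYr.div_const (β ^ (r - 1))).mono
      ((hY.sub hT).abs.aestronglyMeasurable) ?_
    filter_upwards with ω
    simp only [Real.norm_eq_abs, abs_abs]
    exact (hbound ω).trans (le_abs_self _)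
  have hgle : (∫ ω, |Y ω - trunc β (Y ω)| ∂μ) ≤ M / β ^ (r - 1) := by
    calc (∫ ω, |Y ω - trunc β (Y ω)| ∂μ)
        ≤ ∫ ω, |Y ω| ^ r / β ^ (r - 1) ∂μ :=
          integral_mono hgint (hYr.div_const _) hbound
      _ = (∫ ω, |Y ω| ^ r ∂μ) / β ^ (r - 1) := by
          rw [integral_div]
      _ ≤ M / β ^ (r - 1) := by
          gcongr
  -- generic bound for differences
  have main : ∀ (f : 𝒳 → ℝ),
      Integrable (fun ω => ℓ (f (X ω)) (Y ω)) μ →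
      Integrable (fun ω => ℓ (f (X ω)) (trunc β (Y ω))) μ →
      |(∫ ω, ℓ (f (X ω)) (Y ω) ∂μ) - ∫ ω, ℓ (f (X ω)) (trunc β (Y ω)) ∂μ|
        ≤ K * M / β ^ (r - 1) := by
    intro f hf1 hf2
    rw [← integral_sub hf1 hf2]
    calc |∫ ω, (ℓ (f (X ω)) (Y ω) - ℓ (f (X ω)) (trunc β (Y ω))) ∂μ|
        ≤ ∫ ω, |ℓ (f (X ω)) (Y ω) - ℓ (f (X ω)) (trunc β (Y ω))| ∂μ := by
          simpa [Real.norm_eq_abs] using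
            norm_integral_le_integral_norm
              (fun ω => ℓ (f (X ω)) (Y ω) - ℓ (f (X ω)) (trunc β (Y ω)))
      _ ≤ ∫ ω, K * |Y ω - trunc β (Y ω)| ∂μ := by
          refine integral_mono (hf1.sub hf2).abs (hgint.const_mul K) ?_
          intro ω; exact hlip _ _ _
      _ = K * ∫ ω, |Y ω - trunc β (Y ω)| ∂μ := integral_const_mul K _
      _ ≤ K * (M / β ^ (r - 1)) := mul_le_mul_of_nonneg_left hgle hK.le
      _ = K * M / β ^ (r - 1) := by ring
  have e1 := abs_le.mp (main h int1 int3)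
  have e2 := abs_le.mp (main hstar int2 int5)
  have : 2 * K * M / β ^ (r - 1) = K * M / β ^ (r - 1) + K * M / β ^ (r - 1) := by
    ring
  rw [this]
  linarith [e1.2, e2.1]
end

section
/- Let (X, Y) be a random pair on a probability space, with X valued in a measurable space 𝒳 and Y real, and suppose E[|Y|^r] ≤ M for some r > 1 and M > 0. Let ℓ : ℝ × ℝ → [0, ∞) be a measurable loss function satisfying |ℓ(u, v) − ℓ(u, v')| ≤ K·|v − v'| for all u, v, v' ∈ ℝ, for some K > 0. Let β > 0, and let h, h*, h*_β : 𝒳 → ℝ be measurable functions such that E[ℓ(h*(X), Y)] ≤ E[ℓ(h*_β(X), Y)] and such that all the expectations appearing below are finite. Then E[ℓ(h(X), T_β Y)] − E[ℓ(h*_β(X), T_β Y)] ≤ E[ℓ(h(X), Y)] − E[ℓ(h*(X), Y)] + 2·K·M / β^{r−1}. -/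
open MeasureTheory

/-- If `E[|Y|^r] ≤ M` for some `r > 1`, `ℓ` is `K`-Lipschitz in its second argument,
`β > 0`, and `h*` has untruncated risk no larger than that of `h*_β`, then
`E[ℓ(h(X),T_β Y)] − E[ℓ(h*_β(X),T_β Y)] ≤ E[ℓ(h(X),Y)] − E[ℓ(h*(X),Y)] + 2KM/β^(r−1)`. -/
theorem truncated_excess_risk_le_excess_risk {Ω 𝒳 : Type*}
    [MeasurableSpace Ω] [MeasurableSpace 𝒳]
    (μ : Measure Ω) [IsProbabilityMeasure μ]
    (X : Ω → 𝒳) (Y : Ω → ℝ) (hX : Measurable X) (hY : Measurable Y)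
    (r M : ℝ) (hr : 1 < r) (hM : 0 < M)
    (hYr : Integrable (fun ω => |Y ω| ^ r) μ)
    (hYM : (∫ ω, |Y ω| ^ r ∂μ) ≤ M)
    (ℓ : ℝ → ℝ → ℝ) (hℓmeas : Measurable (Function.uncurry ℓ))
    (hℓnonneg : ∀ u v, 0 ≤ ℓ u v)
    (K : ℝ) (hK : 0 < K)
    (hlip : ∀ u v v', |ℓ u v - ℓ u v'| ≤ K * |v - v'|)
    (β : ℝ) (hβ : 0 < β)
    (h hstar hstarβ : 𝒳 → ℝ)
    (hh : Measurable h) (hhstar : Measurable hstar) (hhstarβ : Measurable hstarβ)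
    (int1 : Integrable (fun ω => ℓ (h (X ω)) (Y ω)) μ)
    (int2 : Integrable (fun ω => ℓ (hstar (X ω)) (Y ω)) μ)
    (int3 : Integrable (fun ω => ℓ (h (X ω)) (trunc β (Y ω))) μ)
    (int4 : Integrable (fun ω => ℓ (hstarβ (X ω)) (trunc β (Y ω))) μ)
    (int5 : Integrable (fun ω => ℓ (hstarβ (X ω)) (Y ω)) μ)
    (hmin : (∫ ω, ℓ (hstar (X ω)) (Y ω) ∂μ) ≤ ∫ ω, ℓ (hstarβ (X ω)) (Y ω) ∂μ) :
    (∫ ω, ℓ (h (X ω)) (trunc β (Y ω)) ∂μ)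
        - (∫ ω, ℓ (hstarβ (X ω)) (trunc β (Y ω)) ∂μ) ≤
      (∫ ω, ℓ (h (X ω)) (Y ω) ∂μ) - (∫ ω, ℓ (hstar (X ω)) (Y ω) ∂μ)
        + 2 * K * M / β ^ (r - 1) := by

  have hβr : (0:ℝ) < β ^ (r - 1) := Real.rpow_pos_of_pos hβ _
  -- pointwise bound on truncation error
  have habs : ∀ y : ℝ, |trunc β y - y| ≤ |y| ^ r / β ^ (r - 1) := by
    intro y
    unfold trunc
    split_ifs with h1
    · simp only [sub_self, abs_zero]
      positivity
    · push_neg at h1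
      have hy : 0 < |y| := lt_trans hβ h1
      have h2 : |β * Real.sign y - y| = |y| - β := by
        rcases lt_trichotomy y 0 with hlt | heq | hgt
        · rw [Real.sign_of_neg hlt]
          rw [abs_of_neg hlt] at h1 ⊢
          rw [abs_of_nonneg (by linarith)]
          ring
        · subst heq; simp at hy
        · rw [Real.sign_of_pos hgt]
          rw [abs_of_pos hgt] at h1 ⊢
          rw [abs_of_nonpos (by linarith)]
          ring
      rw [h2]
      have h3 : β ^ (r - 1) ≤ |y| ^ (r - 1) :=
        Real.rpow_le_rpow hβ.le h1.le (by linarith)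
      have h4 : |y| * β ^ (r - 1) ≤ |y| ^ r := by
        calc |y| * β ^ (r - 1) ≤ |y| * |y| ^ (r - 1) := by
              exact mul_le_mul_of_nonneg_left h3 hy.le
          _ = |y| ^ (1 : ℝ) * |y| ^ (r - 1) := by rw [Real.rpow_one]
          _ = |y| ^ r := by rw [← Real.rpow_add hy]; ring_nf
      rw [le_div_iff₀ hβr]
      nlinarith
  -- pointwise Lipschitz bound
  have hpt : ∀ (g : 𝒳 → ℝ) (ω : Ω),
      |ℓ (g (X ω)) (trunc β (Y ω)) - ℓ (g (X ω)) (Y ω)|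
        ≤ K * (|Y ω| ^ r / β ^ (r - 1)) := by
    intro g ω
    calc |ℓ (g (X ω)) (trunc β (Y ω)) - ℓ (g (X ω)) (Y ω)|
        ≤ K * |trunc β (Y ω) - Y ω| := hlip _ _ _
      _ ≤ K * (|Y ω| ^ r / β ^ (r - 1)) :=
          mul_le_mul_of_nonneg_left (habs _) hK.le
  -- integral comparison lemma
  have hdiff : ∀ (f g : Ω → ℝ), Integrable f μ → Integrable g μ →
      (∀ ω, |f ω - g ω| ≤ K * (|Y ω| ^ r / β ^ (r - 1))) →
      |(∫ ω, f ω ∂μ) - ∫ ω, g ω ∂μ| ≤ K * M / β ^ (r - 1) := by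
    intro f g hf hg hb
    rw [← integral_sub hf hg]
    have hint : Integrable (fun ω => K * (|Y ω| ^ r / β ^ (r - 1))) μ := by
      have := (hYr.div_const (β ^ (r - 1))).const_mul K
      simpa using this
    calc |∫ ω, (f ω - g ω) ∂μ| ≤ ∫ ω, |f ω - g ω| ∂μ := by
          simpa using norm_integral_le_integral_norm (fun ω => f ω - g ω) (μ := μ)
      _ ≤ ∫ ω, K * (|Y ω| ^ r / β ^ (r - 1)) ∂μ :=
          integral_mono (hf.sub hg).abs hint hb
      _ = K / β ^ (r - 1) * ∫ ω, |Y ω| ^ r ∂μ := by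
          rw [← integral_const_mul]
          congr 1; funext ω; ring
      _ ≤ K / β ^ (r - 1) * M := by
          exact mul_le_mul_of_nonneg_left hYM (by positivity)
      _ = K * M / β ^ (r - 1) := by ring
  have b1 := hdiff _ _ int3 int1 (hpt h)
  have b2 := hdiff _ _ int4 int5 (hpt hstarβ)
  rw [abs_le] at b1 b2
  have e1 := b1.1; have e2 := b1.2; have e3 := b2.1; have e4 := b2.2
  have : 2 * K * M / β ^ (r - 1) = K * M / β ^ (r - 1) + K * M / β ^ (r - 1) := by
    ring
  linarith
end
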